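/- arXiv:2412.10160 — 5 statements merged into one kernel-verified Lean document; each statement's English description precedes it below -/
import Mathlib

section
/- In the chunk-redistribution setup, for each PE i and bucket k, P[Y_i^k ≥ 2n/(pq)] ≤ exp(−3n/(8pqc)). -/
open Finset in
private lemma exp_convex_aux (c t : ℝ) (hc : 0 < c) (ht0 : 0 ≤ t) (htc : t ≤ c) :
    Real.exp (Real.log 2 / c * t) ≤ 1 + t / c := by
  set s := t / c with hs
  have hs0 : 0 ≤ s := div_nonneg ht0 hc.le
  have hs1 : s ≤ 1 := (div_le_one hc).2 htc
  have h := convexOn_exp.2 (Set.mem_univ 0) (Set.mem_univ (Real.log 2))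
    (by linarith : (0:ℝ) ≤ 1 - s) hs0 (by ring)
  simp only [smul_eq_mul, mul_zero, zero_add, Real.exp_zero,
    Real.exp_log (by norm_num : (0:ℝ) < 2)] at h
  have he : Real.log 2 / c * t = s * Real.log 2 := by
    rw [hs]; field_simp
  rw [he]
  linarith

open Finset in
/-- Bernstein-type tail bound in the chunk-redistribution setup: the probability
(under the uniform distribution on assignments `Fin (n/c) → Fin p`) that PE `i`
receives at least `2n/(pq)` bucket-`k` elements is at most `exp(−3n/(8pqc))`. -/
theorem chunk_redistribution_tail_bound (n c p q : ℕ) (hc : 0 < c) (hp : 0 < p)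
    (hq : 0 < q) (hn : 0 < n) (hdvd : c ∣ n) (cnt : Fin (n / c) → ℕ)
    (hbound : ∀ j, cnt j ≤ c) (hsum : ∑ j, (cnt j : ℝ) = (n : ℝ) / q) (i : Fin p) :
    ((Finset.univ.filter (fun ω : Fin (n / c) → Fin p =>
        2 * (n : ℝ) / (p * q) ≤ ∑ j, (if ω j = i then (cnt j : ℝ) else 0))).card : ℝ) /
        (p : ℝ) ^ (n / c) ≤
      Real.exp (-(3 * (n : ℝ)) / (8 * p * q * c)) := by
  classical
  have hc' : (0:ℝ) < c := by exact_mod_cast hc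
  have hp' : (0:ℝ) < p := by exact_mod_cast hp
  have hq' : (0:ℝ) < q := by exact_mod_cast hq
  have hn' : (0:ℝ) < n := by exact_mod_cast hn
  have hp1 : (1:ℝ) ≤ p := by exact_mod_cast hp
  set L : ℝ := Real.log 2 / c with hL
  have hL0 : 0 < L := div_pos (Real.log_pos (by norm_num)) hc'
  set a : ℝ := 2 * (n:ℝ) / (p * q) with ha
  set S : (Fin (n / c) → Fin p) → ℝ := fun ω => ∑ j, (if ω j = i then (cnt j : ℝ) else 0)
    with hS
  -- Step 1: Chernoff counting bound
  have step1 : ((Finset.univ.filter (fun ω : Fin (n / c) → Fin p => a ≤ S ω)).card : ℝ)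
      ≤ ∑ ω : Fin (n / c) → Fin p, Real.exp (L * (S ω - a)) := by
    calc ((Finset.univ.filter (fun ω : Fin (n / c) → Fin p => a ≤ S ω)).card : ℝ)
        = ∑ _ω ∈ Finset.univ.filter (fun ω : Fin (n / c) → Fin p => a ≤ S ω), (1:ℝ) := by
          simp
      _ ≤ ∑ ω ∈ Finset.univ.filter (fun ω : Fin (n / c) → Fin p => a ≤ S ω),
            Real.exp (L * (S ω - a)) := by
          refine Finset.sum_le_sum fun ω hω => ?_
          have hωa : a ≤ S ω := (Finset.mem_filter.mp hω).2
          exact Real.one_le_exp (mul_nonneg hL0.le (by linarith))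
      _ ≤ ∑ ω : Fin (n / c) → Fin p, Real.exp (L * (S ω - a)) :=
          Finset.sum_le_sum_of_subset_of_nonneg (Finset.filter_subset _ _)
            (fun _ _ _ => (Real.exp_pos _).le)
  -- Step 2: factorize the sum
  have step2 : ∑ ω : Fin (n / c) → Fin p, Real.exp (L * (S ω - a))
      = Real.exp (-(L * a)) *
        ∏ j : Fin (n / c), (Real.exp (L * cnt j) + ((p:ℝ) - 1)) := by
    have hsum_eq : ∀ j : Fin (n / c),
        (∑ x : Fin p, Real.exp (L * (if x = i then (cnt j : ℝ) else 0)))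
          = Real.exp (L * cnt j) + ((p:ℝ) - 1) := by
      intro j
      have huniv : (Finset.univ : Finset (Fin p)) = insert i (Finset.univ.erase i) :=
        (Finset.insert_erase (Finset.mem_univ i)).symm
      rw [huniv, Finset.sum_insert (Finset.notMem_erase _ _), if_pos rfl]
      have h1 : ∑ x ∈ Finset.univ.erase i,
          Real.exp (L * (if x = i then (cnt j : ℝ) else 0))
            = ∑ _x ∈ Finset.univ.erase i, (1:ℝ) :=
        Finset.sum_congr rfl fun x hx => by
          rw [if_neg (Finset.ne_of_mem_erase hx), mul_zero, Real.exp_zero]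
      rw [h1, Finset.sum_const, nsmul_eq_mul, mul_one,
        Finset.card_erase_of_mem (Finset.mem_univ i), Finset.card_univ,
        Fintype.card_fin, Nat.cast_sub hp]
      simp
    calc ∑ ω : Fin (n / c) → Fin p, Real.exp (L * (S ω - a))
        = ∑ ω : Fin (n / c) → Fin p, Real.exp (-(L * a)) *
            ∏ j : Fin (n / c), Real.exp (L * (if ω j = i then (cnt j : ℝ) else 0)) := by
          refine Finset.sum_congr rfl fun ω _ => ?_
          rw [← Real.exp_sum, ← Real.exp_add, hS]
          congr 1
          rw [← Finset.mul_sum]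
          ring
      _ = Real.exp (-(L * a)) * ∑ ω : Fin (n / c) → Fin p,
            ∏ j : Fin (n / c), Real.exp (L * (if ω j = i then (cnt j : ℝ) else 0)) := by
          rw [Finset.mul_sum]
      _ = Real.exp (-(L * a)) *
            ∏ j : Fin (n / c), ∑ x : Fin p, Real.exp (L * (if x = i then (cnt j : ℝ) else 0)) := by
          congr 1
          rw [Finset.prod_univ_sum (fun _ => (Finset.univ : Finset (Fin p)))
            (fun j x => Real.exp (L * (if x = i then (cnt j : ℝ) else 0))),
            Fintype.piFinset_univ]
      _ = Real.exp (-(L * a)) *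
            ∏ j : Fin (n / c), (Real.exp (L * cnt j) + ((p:ℝ) - 1)) := by
          rw [Finset.prod_congr rfl fun j _ => hsum_eq j]
  -- Step 3: bound each factor
  have step3 : ∏ j : Fin (n / c), (Real.exp (L * cnt j) + ((p:ℝ) - 1))
      ≤ (p:ℝ) ^ (n / c) * Real.exp ((n:ℝ) / q / (c * p)) := by
    have hfac : ∀ j : Fin (n / c), Real.exp (L * cnt j) + ((p:ℝ) - 1)
        ≤ (p:ℝ) * Real.exp ((cnt j : ℝ) / (c * p)) := by
      intro j
      have h1 : Real.exp (L * cnt j) ≤ 1 + (cnt j : ℝ) / c := by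
        rw [hL]
        exact exp_convex_aux c (cnt j) hc' (Nat.cast_nonneg _)
          (by exact_mod_cast hbound j)
      have h2 : (cnt j : ℝ) / (c * p) + 1 ≤ Real.exp ((cnt j : ℝ) / (c * p)) :=
        Real.add_one_le_exp _
      have h3 : (p:ℝ) * ((cnt j : ℝ) / (c * p) + 1)
          ≤ (p:ℝ) * Real.exp ((cnt j : ℝ) / (c * p)) :=
        mul_le_mul_of_nonneg_left h2 hp'.le
      have h4 : (p:ℝ) * ((cnt j : ℝ) / (c * p) + 1) = (cnt j : ℝ) / c + p := by
        field_simp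
      nlinarith [h1, h3, h4]
    calc ∏ j : Fin (n / c), (Real.exp (L * cnt j) + ((p:ℝ) - 1))
        ≤ ∏ j : Fin (n / c), (p:ℝ) * Real.exp ((cnt j : ℝ) / (c * p)) := by
          refine Finset.prod_le_prod (fun j _ => ?_) (fun j _ => hfac j)
          have := Real.exp_pos (L * (cnt j : ℝ))
          linarith [hp1]
      _ = (p:ℝ) ^ (n / c) * ∏ j : Fin (n / c), Real.exp ((cnt j : ℝ) / (c * p)) := by
          rw [Finset.prod_mul_distrib, Finset.prod_const, Finset.card_univ,
            Fintype.card_fin]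
      _ = (p:ℝ) ^ (n / c) * Real.exp ((n:ℝ) / q / (c * p)) := by
          rw [← Real.exp_sum]
          congr 1
          rw [← Finset.sum_div, hsum]
  -- Step 4: exponent comparison
  have step4 : Real.exp (-(L * a)) * Real.exp ((n:ℝ) / q / (c * p))
      ≤ Real.exp (-(3 * (n:ℝ)) / (8 * p * q * c)) := by
    rw [← Real.exp_add, Real.exp_le_exp]
    have hA : (0:ℝ) < (n:ℝ) / (p * q * c) := by positivity
    have e1 : -(L * a) + (n:ℝ) / q / (c * p)
        = ((n:ℝ) / (p * q * c)) * (1 - 2 * Real.log 2) := by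
      rw [hL, ha]; field_simp; ring
    have e2 : -(3 * (n:ℝ)) / (8 * p * q * c)
        = ((n:ℝ) / (p * q * c)) * (-(3/8)) := by
      field_simp
    rw [e1, e2]
    have hlog := Real.log_two_gt_d9
    exact mul_le_mul_of_nonneg_left (by nlinarith) hA.le
  -- Combine
  rw [div_le_iff₀ (by positivity : (0:ℝ) < (p:ℝ) ^ (n / c))]
  calc ((Finset.univ.filter (fun ω : Fin (n / c) → Fin p => a ≤ S ω)).card : ℝ)
      ≤ ∑ ω : Fin (n / c) → Fin p, Real.exp (L * (S ω - a)) := step1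
    _ = Real.exp (-(L * a)) *
        ∏ j : Fin (n / c), (Real.exp (L * cnt j) + ((p:ℝ) - 1)) := step2
    _ ≤ Real.exp (-(L * a)) * ((p:ℝ) ^ (n / c) * Real.exp ((n:ℝ) / q / (c * p))) :=
        mul_le_mul_of_nonneg_left step3 (Real.exp_pos _).le
    _ = Real.exp (-(L * a)) * Real.exp ((n:ℝ) / q / (c * p)) * (p:ℝ) ^ (n / c) := by ring
    _ ≤ Real.exp (-(3 * (n:ℝ)) / (8 * p * q * c)) * (p:ℝ) ^ (n / c) :=
        mul_le_mul_of_nonneg_right step4 (by positivity)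
end

section
/- Combined chunk-redistribution theorem: when n/c chunks, each containing at most c elements, are assigned independently and uniformly at random to p PEs, each bucket k ∈ [0, q) containing exactly n/q elements, then each PE receives in expectation n/(pq) elements of each bucket, and if n ≥ 8c(γ+2)pq·ln(p)/3, γ > 0, q ≤ p, p ≥ 2, the probability that some PE receives at least 2n/(pq) elements of some bucket is at most p^{−γ}. -/
open Finset in
theorem aux_prod (m p : ℕ) (f : Fin m → Fin p → ℝ) :
    ∑ ω : Fin m → Fin p, ∏ j, f j (ω j) = ∏ j, ∑ x, f j x := by
  rw [Finset.prod_univ_sum, ← Fintype.piFinset_univ]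

open Finset in
theorem aux_proj (m p : ℕ) (g : Fin p → ℝ) (j : Fin m) :
    ∑ ω : Fin m → Fin p, g (ω j) = (∑ x, g x) * (p : ℝ) ^ (m - 1) := by
  have h := aux_prod m p (fun j' x => if j' = j then g x else 1)
  have h1 : ∀ ω : Fin m → Fin p, (∏ j', if j' = j then g (ω j') else 1) = g (ω j) := by
    intro ω
    rw [Finset.prod_eq_single j (fun b _ hb => if_neg hb)] <;> simp
  simp only [h1] at h
  rw [h, ← Finset.mul_prod_erase univ _ (mem_univ j)]
  have h3 : ∀ j' ∈ univ.erase j, (∑ x : Fin p, if j' = j then g x else 1) = (p:ℝ) := by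
    intro j' hj'; simp [(Finset.mem_erase.mp hj').1]
  rw [Finset.prod_congr rfl h3, Finset.prod_const, Finset.card_erase_of_mem (mem_univ j)]
  simp

theorem aux_conv (s : ℝ) (h0 : 0 ≤ s) (h1 : s ≤ 1) :
    Real.exp (s * Real.log 2) ≤ 1 + s := by
  have h := convexOn_exp.2 (Set.mem_univ (0:ℝ)) (Set.mem_univ (Real.log 2))
    (show (0:ℝ) ≤ 1 - s by linarith) h0 (by ring)
  simp only [smul_eq_mul, mul_zero, zero_add, Real.exp_zero,
    Real.exp_log (by norm_num : (0:ℝ) < 2)] at h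
  linarith

open Finset in
theorem aux_coord (p : ℕ) (hp : 0 < p) (i : Fin p) (v : ℝ) (t : ℝ) :
    ∑ x : Fin p, Real.exp (t * (if x = i then v else 0))
      ≤ (p : ℝ) * Real.exp ((Real.exp (t * v) - 1) / p) := by
  have hsum : ∑ x : Fin p, Real.exp (t * (if x = i then v else 0))
      = ((p : ℝ) - 1) + Real.exp (t * v) := by
    rw [Finset.sum_eq_add_sum_sdiff_singleton_of_mem (mem_univ i)]
    have h2 : ∀ x ∈ univ \ {i}, Real.exp (t * (if x = i then v else 0)) = 1 := by
      intro x hx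
      simp only [Finset.mem_sdiff, Finset.mem_singleton] at hx
      simp [hx.2]
    rw [Finset.sum_congr rfl h2, Finset.sum_const]
    have h3 : (univ \ {i}).card = p - 1 := by simp [Finset.card_sdiff_of_subset]
    rw [h3]
    have h4 : ((p - 1 : ℕ) : ℝ) = (p : ℝ) - 1 := by
      rw [Nat.cast_sub hp]; simp
    simp [h4]; ring
  rw [hsum]
  have hp' : (0:ℝ) < p := by exact_mod_cast hp
  have h5 : ((p : ℝ) - 1) + Real.exp (t * v)
      = (p : ℝ) * (1 + (Real.exp (t * v) - 1) / p) := by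
    field_simp; ring
  rw [h5]
  have h6 : 1 + (Real.exp (t * v) - 1) / p ≤ Real.exp ((Real.exp (t * v) - 1) / p) := by
    have := Real.add_one_le_exp ((Real.exp (t * v) - 1) / p); linarith
  exact mul_le_mul_of_nonneg_left h6 hp'.le

open Finset in
theorem aux_markov' {α : Type*} [Fintype α] (Y : α → ℝ) (a t : ℝ) (ht : 0 ≤ t)
    [DecidablePred fun ω => a ≤ Y ω] :
    ((univ.filter (fun ω => a ≤ Y ω)).card : ℝ) * Real.exp (t * a)
      ≤ ∑ ω, Real.exp (t * Y ω) := by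
  calc ((univ.filter (fun ω => a ≤ Y ω)).card : ℝ) * Real.exp (t * a)
      ≤ ∑ ω ∈ univ.filter (fun ω => a ≤ Y ω), Real.exp (t * Y ω) := by
        rw [← nsmul_eq_mul]
        apply Finset.card_nsmul_le_sum
        intro x hx
        exact Real.exp_le_exp.mpr (mul_le_mul_of_nonneg_left (mem_filter.mp hx).2 ht)
    _ ≤ ∑ ω, Real.exp (t * Y ω) :=
        Finset.sum_le_sum_of_subset_of_nonneg (filter_subset _ _)
          (fun _ _ _ => (Real.exp_pos _).le)

open Finset in
theorem aux_pair (m p c : ℕ) (hp : 0 < p) (hc : 0 < c) (i : Fin p)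
    (v : Fin m → ℕ) (hb : ∀ j, v j ≤ c) (a S : ℝ) (hS : ∑ j, (v j : ℝ) = S) :
    ((univ.filter (fun ω : Fin m → Fin p =>
        a ≤ ∑ j, (if ω j = i then (v j : ℝ) else 0))).card : ℝ)
      ≤ (p : ℝ) ^ m * Real.exp (S / (c * p) - (Real.log 2 / c) * a) := by
  set t : ℝ := Real.log 2 / c with htdef
  have ht : 0 ≤ t := div_nonneg (Real.log_nonneg one_le_two) (by positivity)
  have hcp : (0:ℝ) < c := by exact_mod_cast hc
  have hpp : (0:ℝ) < p := by exact_mod_cast hp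
  have hmgf : ∑ ω : Fin m → Fin p, Real.exp (t * ∑ j, (if ω j = i then (v j : ℝ) else 0))
      ≤ (p : ℝ) ^ m * Real.exp (S / (c * p)) := by
    have e1 : ∀ ω : Fin m → Fin p,
        Real.exp (t * ∑ j, (if ω j = i then (v j : ℝ) else 0))
        = ∏ j, Real.exp (t * (if ω j = i then (v j : ℝ) else 0)) := by
      intro ω; rw [Finset.mul_sum, Real.exp_sum]
    simp only [e1]
    rw [aux_prod m p (fun j x => Real.exp (t * (if x = i then (v j : ℝ) else 0)))]
    calc ∏ j, ∑ x : Fin p, Real.exp (t * (if x = i then (v j : ℝ) else 0))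
        ≤ ∏ j, (p : ℝ) * Real.exp ((Real.exp (t * v j) - 1) / p) := by
          apply Finset.prod_le_prod
          · intro j _; positivity
          · intro j _; exact aux_coord p hp i (v j) t
      _ = (p : ℝ) ^ m * Real.exp (∑ j, (Real.exp (t * v j) - 1) / p) := by
          rw [Finset.prod_mul_distrib, Finset.prod_const, ← Real.exp_sum]
          simp
      _ ≤ (p : ℝ) ^ m * Real.exp (S / (c * p)) := by
          apply mul_le_mul_of_nonneg_left _ (by positivity)
          apply Real.exp_le_exp.mpr
          have step : ∀ j, (Real.exp (t * v j) - 1) / p ≤ (v j : ℝ) / (c * p) := by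
            intro j
            have hs0 : 0 ≤ (v j : ℝ) / c := by positivity
            have hs1 : (v j : ℝ) / c ≤ 1 := by
              rw [div_le_one hcp]; exact_mod_cast hb j
            have := aux_conv ((v j : ℝ) / c) hs0 hs1
            have heq : t * v j = ((v j : ℝ) / c) * Real.log 2 := by
              rw [htdef]; field_simp
            rw [heq]
            rw [div_le_div_iff₀ hpp (by positivity)]
            have h2 : Real.exp ((v j : ℝ) / c * Real.log 2) - 1 ≤ (v j : ℝ) / c := by
              linarith
            calc (Real.exp ((v j:ℝ)/c * Real.log 2) - 1) * (c * p)
                ≤ ((v j : ℝ) / c) * (c * p) := by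
                  apply mul_le_mul_of_nonneg_right h2 (by positivity)
              _ = (v j : ℝ) * p := by field_simp
          calc ∑ j, (Real.exp (t * v j) - 1) / p ≤ ∑ j, (v j : ℝ) / (c * p) :=
                Finset.sum_le_sum (fun j _ => step j)
            _ = S / (c * p) := by rw [← Finset.sum_div, hS]
  have hm := aux_markov' (fun ω : Fin m → Fin p => ∑ j, (if ω j = i then (v j : ℝ) else 0))
    a t ht
  have hexp : (0:ℝ) < Real.exp (t * a) := Real.exp_pos _
  rw [Real.exp_sub]
  have final : ((univ.filter (fun ω : Fin m → Fin p =>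
      a ≤ ∑ j, (if ω j = i then (v j : ℝ) else 0))).card : ℝ)
      ≤ (p : ℝ) ^ m * Real.exp (S / (c * p)) / Real.exp (t * a) := by
    rw [le_div_iff₀ hexp]
    exact hm.trans hmgf
  calc _ ≤ (p : ℝ) ^ m * Real.exp (S / (c * p)) / Real.exp (t * a) := final
    _ = (p : ℝ) ^ m * (Real.exp (S / (c * p)) / Real.exp (t * a)) := by ring

open Finset in
/-- Combined chunk-redistribution theorem: assigning the `n/c` chunks uniformly and
independently to `p` PEs (uniform distribution on `Fin (n/c) → Fin p`), with each
bucket `k` containing exactly `n/q` elements split among the chunks as `cnt k j ≤ c`,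
every PE receives in expectation `n/(pq)` elements of each bucket; and if
`n ≥ 8c(γ+2)pq·ln(p)/3`, `γ > 0`, `q ≤ p`, `p ≥ 2`, then the probability that some
PE receives at least `2n/(pq)` elements of some bucket is at most `p^{−γ}`. -/
theorem chunk_redistribution (n c p q : ℕ) (hc : 0 < c) (hp : 2 ≤ p) (hq : 0 < q)
    (hqp : q ≤ p) (hn : 0 < n) (hdvd : c ∣ n) (γ : ℝ) (hγ : 0 < γ)
    (cnt : Fin q → Fin (n / c) → ℕ) (hbound : ∀ k j, cnt k j ≤ c)
    (hsum : ∀ k, ∑ j, (cnt k j : ℝ) = (n : ℝ) / q)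
    (hlarge : 8 * (c : ℝ) * (γ + 2) * p * q * Real.log p / 3 ≤ n) :
    (∀ (i : Fin p) (k : Fin q),
        (∑ ω : Fin (n / c) → Fin p,
            ∑ j, (if ω j = i then (cnt k j : ℝ) else 0)) / (p : ℝ) ^ (n / c) =
          (n : ℝ) / (p * q)) ∧
      ((Finset.univ.filter (fun ω : Fin (n / c) → Fin p =>
          ∃ (i : Fin p) (k : Fin q),
            2 * (n : ℝ) / (p * q) ≤ ∑ j, (if ω j = i then (cnt k j : ℝ) else 0))).card : ℝ) /
          (p : ℝ) ^ (n / c) ≤ (p : ℝ) ^ (-γ) := by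
  have hp0 : 0 < p := by omega
  have hpp : (0:ℝ) < p := by exact_mod_cast hp0
  have hqq : (0:ℝ) < q := by exact_mod_cast hq
  have hcc : (0:ℝ) < c := by exact_mod_cast hc
  have hnn : (0:ℝ) < n := by exact_mod_cast hn
  have hm1 : 1 ≤ n / c :=
    Nat.one_le_div_iff hc |>.mpr (Nat.le_of_dvd hn hdvd)
  have hpm : (p : ℝ) ^ (n / c) = (p : ℝ) ^ (n / c - 1) * p := by
    conv_lhs => rw [← Nat.sub_add_cancel hm1, pow_succ]
  have hpm1 : (0:ℝ) < (p:ℝ) ^ (n / c - 1) := by positivity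
  have hpmpos : (0:ℝ) < (p:ℝ) ^ (n / c) := by positivity
  constructor
  · -- expectation part
    intro i k
    have swap : ∑ ω : Fin (n / c) → Fin p, ∑ j, (if ω j = i then (cnt k j : ℝ) else 0)
        = ∑ j, ∑ ω : Fin (n / c) → Fin p, (if ω j = i then (cnt k j : ℝ) else 0) :=
      Finset.sum_comm
    rw [swap]
    have inner : ∀ j : Fin (n / c), ∑ ω : Fin (n / c) → Fin p, (if ω j = i then (cnt k j : ℝ) else 0)
        = (cnt k j : ℝ) * (p : ℝ) ^ (n / c - 1) := by
      intro j
      have := aux_proj (n / c) p (fun x => if x = i then (cnt k j : ℝ) else 0) j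
      rw [this, Finset.sum_ite_eq' univ i (fun _ => (cnt k j : ℝ))]
      simp
    simp only [inner]
    rw [← Finset.sum_mul, hsum k, hpm]
    field_simp
  · -- probability part
    set a : ℝ := 2 * (n : ℝ) / (p * q) with ha
    set B : ℝ := ((n:ℝ)/q) / (c * p) - (Real.log 2 / c) * a with hB
    -- union bound
    have hunion : ((univ.filter (fun ω : Fin (n / c) → Fin p =>
        ∃ (i : Fin p) (k : Fin q),
          a ≤ ∑ j, (if ω j = i then (cnt k j : ℝ) else 0))).card : ℝ)
        ≤ (p : ℝ) * q * ((p : ℝ) ^ (n / c) * Real.exp B) := by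
      have hsub : (univ.filter (fun ω : Fin (n / c) → Fin p =>
          ∃ (i : Fin p) (k : Fin q),
            a ≤ ∑ j, (if ω j = i then (cnt k j : ℝ) else 0)))
          ⊆ univ.biUnion (fun i : Fin p => univ.biUnion (fun k : Fin q =>
              univ.filter (fun ω : Fin (n / c) → Fin p =>
                a ≤ ∑ j, (if ω j = i then (cnt k j : ℝ) else 0)))) := by
        intro ω hω
        simp only [mem_filter, mem_univ, true_and] at hω
        obtain ⟨i, k, hik⟩ := hω
        simp only [Finset.mem_biUnion, mem_univ, true_and, mem_filter]
        exact ⟨i, k, hik⟩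
      have hcard : (univ.filter (fun ω : Fin (n / c) → Fin p =>
          ∃ (i : Fin p) (k : Fin q),
            a ≤ ∑ j, (if ω j = i then (cnt k j : ℝ) else 0))).card
          ≤ ∑ i : Fin p, ∑ k : Fin q,
              (univ.filter (fun ω : Fin (n / c) → Fin p =>
                a ≤ ∑ j, (if ω j = i then (cnt k j : ℝ) else 0))).card := by
        calc _ ≤ _ := Finset.card_le_card hsub
          _ ≤ ∑ i : Fin p, (univ.biUnion (fun k : Fin q =>
              univ.filter (fun ω : Fin (n / c) → Fin p =>
                a ≤ ∑ j, (if ω j = i then (cnt k j : ℝ) else 0)))).card :=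
            Finset.card_biUnion_le
          _ ≤ _ := Finset.sum_le_sum (fun i _ => Finset.card_biUnion_le)
      calc ((univ.filter (fun ω : Fin (n / c) → Fin p =>
          ∃ (i : Fin p) (k : Fin q),
            a ≤ ∑ j, (if ω j = i then (cnt k j : ℝ) else 0))).card : ℝ)
          ≤ ∑ i : Fin p, ∑ k : Fin q,
              ((univ.filter (fun ω : Fin (n / c) → Fin p =>
                a ≤ ∑ j, (if ω j = i then (cnt k j : ℝ) else 0))).card : ℝ) := by
            exact_mod_cast hcard
        _ ≤ ∑ _i : Fin p, ∑ _k : Fin q, (p : ℝ) ^ (n / c) * Real.exp B := by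
            apply Finset.sum_le_sum; intro i _
            apply Finset.sum_le_sum; intro k _
            have := aux_pair (n / c) p c hp0 hc i (cnt k) (hbound k) a ((n:ℝ)/q) (hsum k)
            rw [hB]
            exact this
        _ = (p : ℝ) * q * ((p : ℝ) ^ (n / c) * Real.exp B) := by
            simp [Finset.sum_const, Finset.card_univ, mul_assoc]
    -- key exponent inequality
    have hlog2 : (0.6931471803 : ℝ) < Real.log 2 := Real.log_two_gt_d9
    have hlogp : 0 ≤ Real.log p := Real.log_nonneg (by exact_mod_cast hp0)
    have hX : 8 * (γ + 2) * Real.log p / 3 ≤ (n:ℝ) / (c * p * q) := by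
      rw [le_div_iff₀ (by positivity)]
      calc 8 * (γ + 2) * Real.log p / 3 * (c * p * q)
          = 8 * c * (γ + 2) * p * q * Real.log p / 3 := by ring
        _ ≤ n := hlarge
    have hBle : B ≤ -((γ + 2) * Real.log p) := by
      have hBeq : B = -(((n:ℝ) / (c * p * q)) * (2 * Real.log 2 - 1)) := by
        rw [hB, ha]; field_simp; ring
      rw [hBeq, neg_le_neg_iff]
      have hX0 : 0 ≤ (n:ℝ) / (c * p * q) := by positivity
      nlinarith [mul_le_mul_of_nonneg_right hX (show (0:ℝ) ≤ 2 * Real.log 2 - 1 by nlinarith)]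
    -- conclusion
    have hfinal : (p : ℝ) * q * Real.exp B ≤ (p : ℝ) ^ (-γ) := by
      have hrw : (p : ℝ) ^ (-γ) = (p : ℝ) * (p : ℝ) * Real.exp (-((γ + 2) * Real.log p)) := by
        have h1 : Real.exp (-((γ + 2) * Real.log p)) = (p:ℝ) ^ (-(γ + 2)) := by
          rw [Real.rpow_def_of_pos hpp]; ring_nf
        rw [h1]
        have h2 : (p:ℝ) * (p:ℝ) = (p:ℝ) ^ (2:ℝ) := by
          rw [show (2:ℝ) = ((2:ℕ):ℝ) by norm_num, Real.rpow_natCast]; ring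
        rw [h2, ← Real.rpow_add hpp]
        norm_num
      rw [hrw]
      have hqle : (q : ℝ) ≤ p := by exact_mod_cast hqp
      have hexpB : Real.exp B ≤ Real.exp (-((γ + 2) * Real.log p)) :=
        Real.exp_le_exp.mpr hBle
      calc (p : ℝ) * q * Real.exp B ≤ (p : ℝ) * p * Real.exp B := by
            apply mul_le_mul_of_nonneg_right _ (Real.exp_pos _).le
            exact mul_le_mul_of_nonneg_left hqle hpp.le
        _ ≤ (p : ℝ) * p * Real.exp (-((γ + 2) * Real.log p)) := by
            apply mul_le_mul_of_nonneg_left hexpB (by positivity)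
    rw [div_le_iff₀ hpmpos]
    calc ((univ.filter (fun ω : Fin (n / c) → Fin p =>
        ∃ (i : Fin p) (k : Fin q),
          a ≤ ∑ j, (if ω j = i then (cnt k j : ℝ) else 0))).card : ℝ)
        ≤ (p : ℝ) * q * ((p : ℝ) ^ (n / c) * Real.exp B) := hunion
      _ = ((p : ℝ) * q * Real.exp B) * (p : ℝ) ^ (n / c) := by ring
      _ ≤ (p : ℝ) ^ (-γ) * (p : ℝ) ^ (n / c) := by
          exact mul_le_mul_of_nonneg_right hfinal hpmpos.le
end

section
/- Prefix-doubling correctness: let T be a string of length n with distinct suffixes, and for h ≥ 1 let rank_h[i] denote the number of positions j such that the length-h prefix of suffix j is lexicographically smaller than the length-h prefix of suffix i. If rank_h is injective on [0, n), then sorting positions by rank_h yields the suffix array of T, i.e., rank_h[i] < rank_h[j] iff suffix i < suffix j lexicographically. -/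
/-- The `h`-rank of suffix `i`: the number of positions `j` whose length-`h`
prefix of suffix `j` is lexicographically smaller than that of suffix `i`. -/
def hRank {α : Type*} [LinearOrder α] (n h : ℕ) (T : Fin n → α) (i : Fin n) : ℕ :=
  (Finset.univ.filter (fun j : Fin n =>
    List.Lex (· < ·) (((List.ofFn T).drop j).take h) (((List.ofFn T).drop i).take h))).card

/-!
Counting the keys strictly below a given one is strictly monotone in that key, so `hRank`
orders positions exactly as their length-`h` prefixes are ordered, and injectivity of `hRank`
means these prefixes are pairwise distinct. Truncation to length `h` is monotone for the
lexicographic order, so distinct truncations of suffixes compare like the suffixes themselves.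
-/

open Finset

theorem List.Lex.take_eq_or_lex {α : Type*} {r : α → α → Prop} :
    ∀ (k : ℕ) {l m : List α}, Lex r l m → l.take k = m.take k ∨ Lex r (l.take k) (m.take k)
  | 0, _, _, _ => Or.inl rfl
  | _ + 1, _, _, .nil => Or.inr .nil
  | k + 1, _, _, @Lex.cons _ _ a _ _ h => (h.take_eq_or_lex k).imp (congrArg (a :: ·)) .cons
  | _ + 1, _, _, .rel h => Or.inr (.rel h)

theorem List.monotone_take {α : Type*} [LinearOrder α] (k : ℕ) :
    Monotone (List.take k : List α → List α) := by
  intro l m hlm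
  obtain hlt | rfl := hlm.lt_or_eq
  · exact (Lex.take_eq_or_lex k hlt).elim le_of_eq fun h => le_of_lt h
  · exact le_rfl

theorem Finset.card_filter_lt_lt_card_filter_lt_iff {ι β : Type*} [Fintype ι] [LinearOrder β]
    [DecidableLT β] (f : ι → β) (i j : ι) :
    #{k | f k < f i} < #{k | f k < f j} ↔ f i < f j := by
  constructor
  · intro hcard
    by_contra! hji
    refine hcard.not_ge (card_le_card fun k hk => ?_)
    simp only [mem_filter, mem_univ, true_and] at hk ⊢
    exact hk.trans_le hji
  · intro hij
    refine card_lt_card ⟨fun k hk => ?_, fun hsub => ?_⟩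
    · simp only [mem_filter, mem_univ, true_and] at hk ⊢
      exact hk.trans hij
    · simpa using hsub (by simpa using hij : i ∈ ({k | f k < f j} : Finset ι))

theorem hRank_eq_card_filter_lt {α : Type*} [LinearOrder α] (n h : ℕ) (T : Fin n → α)
    (i : Fin n) :
    hRank n h T i =
      #{j : Fin n | ((List.ofFn T).drop j).take h < ((List.ofFn T).drop i).take h} := by
  simp only [hRank, List.lex_lt]

theorem prefix_doubling_correct_general {α : Type*} [LinearOrder α] (n h : ℕ)
    (T : Fin n → α)
    (hinj : Function.Injective (hRank n h T)) :
    ∀ i j : Fin n, hRank n h T i < hRank n h T j ↔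
      List.Lex (· < ·) ((List.ofFn T).drop i) ((List.ofFn T).drop j) := by
  have hprefix_inj : Function.Injective fun i : Fin n => ((List.ofFn T).drop i).take h :=
    fun i j hij => hinj (by simp only [hRank_eq_card_filter_lt, hij])
  intro i j
  rw [hRank_eq_card_filter_lt, hRank_eq_card_filter_lt, List.lex_lt]
  refine (card_filter_lt_lt_card_filter_lt_iff (fun k : Fin n => ((List.ofFn T).drop k).take h)
    i j).trans ⟨(List.monotone_take h).reflect_lt, fun hlt => ?_⟩
  refine (List.monotone_take h hlt.le).lt_of_ne fun heq => ?_
  exact hlt.ne (by rw [hprefix_inj heq])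

/-- Prefix-doubling correctness: if the suffixes of `T` are pairwise distinct and
`hRank` is injective, then sorting positions by `hRank` yields the suffix array:
`hRank i < hRank j` iff suffix `i` is lexicographically smaller than suffix `j`. -/
theorem prefix_doubling_correct {α : Type*} [LinearOrder α] (n h : ℕ) (hh : 1 ≤ h)
    (T : Fin n → α)
    (hdist : ∀ i j : Fin n, i ≠ j → (List.ofFn T).drop i ≠ (List.ofFn T).drop j)
    (hinj : Function.Injective (hRank n h T)) :
    ∀ i j : Fin n, hRank n h T i < hRank n h T j ↔
      List.Lex (· < ·) ((List.ofFn T).drop i) ((List.ofFn T).drop j) :=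
  prefix_doubling_correct_general n h T hinj
end

section
/- DCX comparison lemma: let D be a difference cover modulo X and T a string with distinct suffixes. For any positions i, j there exists l with 0 ≤ l < X such that (i+l) mod X ∈ D and (j+l) mod X ∈ D; for this l, suffix i < suffix j lexicographically if and only if the pair (T[i, i+l), rank[i+l]) is lexicographically smaller than (T[j, j+l), rank[j+l]), where rank is any function assigning to each sample position its rank in the lexicographic order of sample suffixes. -/
/-- Lexicographic comparison of the (sentinel-padded, hence infinite) suffixes
starting at positions `i` and `j` of the padded text `T`. -/
def SuffLt {α : Type*} [LinearOrder α] (T : ℕ → α) (i j : ℕ) : Prop :=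
  ∃ m : ℕ, (∀ t < m, T (i + t) = T (j + t)) ∧ T (i + m) < T (j + m)

private lemma lex_cons_iff' {α : Type*} [LinearOrder α] (a b : α) (l1 l2 : List α) :
    List.Lex (· < ·) (a :: l1) (b :: l2) ↔ a < b ∨ (a = b ∧ List.Lex (· < ·) l1 l2) := by
  constructor
  · intro h
    cases h with
    | rel h => exact Or.inl h
    | cons h => exact Or.inr ⟨rfl, h⟩
  · rintro (h | ⟨rfl, h⟩)
    · exact List.Lex.rel h
    · exact List.Lex.cons h

private lemma lex_ofFn {α : Type*} [LinearOrder α] (l : ℕ) : ∀ (f g : ℕ → α),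
    (List.Lex (· < ·) (List.ofFn fun t : Fin l => f t) (List.ofFn fun t : Fin l => g t) ↔
      ∃ k, k < l ∧ (∀ t < k, f t = g t) ∧ f k < g k) := by
  induction l with
  | zero =>
    intro f g
    simp [List.ofFn_zero]
  | succ n ih =>
    intro f g
    rw [List.ofFn_succ, List.ofFn_succ, lex_cons_iff']
    simp only [Fin.val_succ, Fin.val_zero]
    rw [ih (fun t => f (t + 1)) (fun t => g (t + 1))]
    constructor
    · rintro (h | ⟨h0, k, hk, heq, hlt⟩)
      · exact ⟨0, Nat.succ_pos n, fun t ht => absurd ht (Nat.not_lt_zero t), h⟩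
      · refine ⟨k + 1, by omega, fun t ht => ?_, hlt⟩
        cases t with
        | zero => exact h0
        | succ t => exact heq t (by omega)
    · rintro ⟨k, hk, heq, hlt⟩
      cases k with
      | zero => exact Or.inl hlt
      | succ k =>
        exact Or.inr ⟨heq 0 (Nat.succ_pos k), k, by omega,
          fun t ht => heq (t + 1) (by omega), hlt⟩

private lemma ofFn_eq_iff {α : Type*} (l : ℕ) (f g : ℕ → α) :
    (List.ofFn fun t : Fin l => f t) = (List.ofFn fun t : Fin l => g t) ↔
      ∀ t < l, f t = g t := by
  rw [List.ofFn_inj]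
  constructor
  · intro h t ht
    exact congrFun h ⟨t, ht⟩
  · intro h
    funext t
    exact h t t.isLt

private lemma sufflt_char {α : Type*} [LinearOrder α] (T : ℕ → α) (i j m : ℕ)
    (heq : ∀ t < m, T (i + t) = T (j + t)) (hne : T (i + m) ≠ T (j + m)) :
    SuffLt T i j ↔ T (i + m) < T (j + m) := by
  constructor
  · rintro ⟨m', heq', hlt'⟩
    rcases lt_trichotomy m' m with h | rfl | h
    · exact absurd (heq m' h) hlt'.ne
    · exact hlt'
    · exact absurd (heq' m h) hne
  · intro h
    exact ⟨m, heq, h⟩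

/-- DCX comparison lemma: if `D` is a difference cover modulo `X`, the suffixes of
`T` are pairwise distinct, and `rank` orders the sample suffixes (positions with
residue mod `X` in `D`) lexicographically, then for any positions `i, j` there is
`l < X` with `(i+l) mod X ∈ D` and `(j+l) mod X ∈ D` such that suffix `i` is
smaller than suffix `j` iff the pair `(T[i, i+l), rank[i+l])` is lexicographically
smaller than `(T[j, j+l), rank[j+l])`. -/
theorem dcx_comparison {α : Type*} [LinearOrder α] (X : ℕ) (hX : 0 < X)
    (D : Finset ℕ) (hD : ∀ d ∈ D, d < X)
    (hcov : ∀ i j : ℕ, ∃ l < X, (i + l) % X ∈ D ∧ (j + l) % X ∈ D)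
    (T : ℕ → α)
    (hdist : ∀ i j : ℕ, i ≠ j → ∃ m : ℕ, T (i + m) ≠ T (j + m))
    (rank : ℕ → ℕ)
    (hrank : ∀ a b : ℕ, a % X ∈ D → b % X ∈ D → (rank a < rank b ↔ SuffLt T a b)) :
    ∀ i j : ℕ, ∃ l : ℕ, l < X ∧ (i + l) % X ∈ D ∧ (j + l) % X ∈ D ∧
      (SuffLt T i j ↔
        (List.Lex (· < ·) (List.ofFn fun t : Fin l => T (i + t))
            (List.ofFn fun t : Fin l => T (j + t)) ∨
          ((List.ofFn fun t : Fin l => T (i + t)) =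
              (List.ofFn fun t : Fin l => T (j + t)) ∧
            rank (i + l) < rank (j + l)))) := by
  intro i j
  obtain ⟨l, hl, hi, hj⟩ := hcov i j
  refine ⟨l, hl, hi, hj, ?_⟩
  rw [lex_ofFn l (fun t => T (i + t)) (fun t => T (j + t)),
    ofFn_eq_iff l (fun t => T (i + t)) (fun t => T (j + t)),
    hrank _ _ hi hj]
  by_cases hij : i = j
  · subst hij
    constructor
    · rintro ⟨m, heq, hlt⟩
      exact absurd hlt (lt_irrefl _)
    · rintro (⟨k, _, _, hlt⟩ | ⟨_, m, _, hlt⟩) <;> exact absurd hlt (lt_irrefl _)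
  · have hex := hdist i j hij
    set m := Nat.find hex with hm
    have hne : T (i + m) ≠ T (j + m) := Nat.find_spec hex
    have heq : ∀ t < m, T (i + t) = T (j + t) := fun t ht =>
      not_not.mp (Nat.find_min hex (hm ▸ ht))
    rw [sufflt_char T i j m heq hne]
    by_cases hml : m < l
    · constructor
      · intro h
        exact Or.inl ⟨m, hml, heq, h⟩
      · rintro (⟨k, hk, heqk, hlt⟩ | ⟨heql, _⟩)
        · rcases lt_trichotomy k m with h | rfl | h
          · exact absurd (heq k h) hlt.ne
          · exact hlt
          · exact absurd (heqk m h) hne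
        · exact absurd (heql m hml) hne
    · have heql : ∀ t < l, T (i + t) = T (j + t) := fun t ht => heq t (by omega)
      have hml' : l ≤ m := by omega
      have hshift : SuffLt T (i + l) (j + l) ↔ T (i + m) < T (j + m) := by
        have h1 : ∀ t < m - l, T (i + l + t) = T (j + l + t) := fun t ht => by
          have := heq (l + t) (by omega)
          simpa [Nat.add_assoc] using this
        have h2 : T (i + l + (m - l)) ≠ T (j + l + (m - l)) := by
          have : l + (m - l) = m := by omega
          rw [Nat.add_assoc, Nat.add_assoc, this]
          exact hne
        rw [sufflt_char T (i + l) (j + l) (m - l) h1 h2]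
        have : l + (m - l) = m := by omega
        rw [Nat.add_assoc, Nat.add_assoc, this]
      constructor
      · intro h
        exact Or.inr ⟨heql, hshift.mpr h⟩
      · rintro (⟨k, hk, _, hlt⟩ | ⟨_, h⟩)
        · exact absurd (heq k (by omega)) hlt.ne
        · exact hshift.mp h
end

section
/- DC3 recursion correctness (rank transfer): let T' be the string formed by listing, for sample positions j of T in the order (j mod 3, j div 3), the rank of the 3-prefix of suffix j (ranks over the multiset of 3-prefixes of sample suffixes). Then for any two sample positions a, b of T, suffix a of T is lexicographically smaller than suffix b of T if and only if the corresponding suffix of T' is lexicographically smaller than the suffix of T' corresponding to b. -/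
/-- The `3`-prefix `T[j, j+3)` of suffix `j`. -/
def Pre3 {α : Type*} (T : ℕ → α) (j : ℕ) : List α := [T j, T (j + 1), T (j + 2)]

/-- The rank of the `3`-prefix of sample suffix `j` among the `3`-prefixes of all
sample suffixes (equal prefixes get equal ranks). -/
def Rank3 {α : Type*} [LinearOrder α] (n : ℕ) (T : ℕ → α) (j : ℕ) : ℤ :=
  (((List.range n).filter (fun j' =>
    decide (j' % 3 ≠ 0) &&
      decide (List.Lex (· < ·) (Pre3 T j') (Pre3 T j)))).length : ℤ)

/-- The auxiliary text `T'` of DC3: the renamed sample suffixes with `j % 3 = 1`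
(in text order), a separator smaller than all ranks, then those with `j % 3 = 2`. -/
def DC3Text {α : Type*} [LinearOrder α] (n : ℕ) (T : ℕ → α) : List ℤ :=
  ((List.range n).filter (fun j => j % 3 = 1)).map (Rank3 n T) ++ [-1] ++
    ((List.range n).filter (fun j => j % 3 = 2)).map (Rank3 n T)

/-- The position in `T'` corresponding to sample position `a` of `T`. -/
def DC3Pos (n a : ℕ) : ℕ :=
  if a % 3 = 1 then a / 3 else ((List.range n).filter (fun j => j % 3 = 1)).length + 1 + a / 3

theorem List.lex_of_getElem? {α : Type*} {r : α → α → Prop} {l₁ l₂ : List α} {i : ℕ} {y : α}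
    (heq : ∀ j < i, l₁[j]? = l₂[j]?) (hy : l₂[i]? = some y) (hlt : ∀ x ∈ l₁[i]?, r x y) :
    List.Lex r l₁ l₂ := by
  induction i generalizing l₁ l₂ with
  | zero =>
    obtain ⟨l₂, rfl⟩ : ∃ l, l₂ = y :: l := by
      cases l₂ <;> simp_all
    cases l₁ with
    | nil => exact .nil
    | cons x l₁ => exact .rel (hlt x rfl)
  | succ i ih =>
    obtain ⟨z, l₂, rfl⟩ : ∃ z l, l₂ = z :: l := by
      cases l₂ <;> simp_all
    cases l₁ with
    | nil => exact .nil
    | cons x l₁ =>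
      obtain rfl : x = z := by simpa using heq 0 (Nat.succ_pos i)
      exact .cons (ih (fun j hj => by simpa using heq (j + 1) (by omega)) hy hlt)

theorem List.length_filter_lt_length_filter {α : Type*} {l : List α} {p q : α → Bool}
    (hpq : ∀ x, p x → q x) {x : α} (hx : x ∈ l) (hqx : q x) (hpx : ¬ p x) :
    (l.filter p).length < (l.filter q).length := by
  have hsub := List.monotone_filter_right l hpq
  have hmem : x ∈ l.filter q := List.mem_filter.mpr ⟨hx, hqx⟩
  exact lt_of_le_of_ne hsub.length_le fun hlen =>
    hpx (List.mem_filter.mp (hsub.eq_of_length hlen ▸ hmem)).2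

section Padded

variable {α : Type*} [LinearOrder α] {n : ℕ} {T : ℕ → α}

theorem lt_of_apply_lt (hpad : ∀ i j : ℕ, n ≤ i → j < n → T i < T j)
    (hpadEq : ∀ i j : ℕ, n ≤ i → n ≤ j → T i = T j) {i j : ℕ} (h : T i < T j) : j < n := by
  by_contra hj
  rcases lt_or_ge i n with hi | hi
  · exact lt_asymm h (hpad j i (not_lt.mp hj) hi)
  · exact h.ne (hpadEq i j hi (not_lt.mp hj))

theorem lt_of_apply_eq (hpad : ∀ i j : ℕ, n ≤ i → j < n → T i < T j) {i j : ℕ}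
    (h : T i = T j) (hj : j < n) : i < n := by
  by_contra hi
  exact (hpad i j (not_lt.mp hi) hj).ne h

theorem suffLt_or_suffLt_of_ne (hpad : ∀ i j : ℕ, n ≤ i → j < n → T i < T j) {a b : ℕ}
    (ha : a < n) (hb : b < n) (hab : a ≠ b) : SuffLt T a b ∨ SuffLt T b a := by
  have hsep : ∀ {a b}, a < b → b < n → T (a + (n - b)) ≠ T (b + (n - b)) :=
    fun hab hb => (hpad _ _ (by omega) (by omega)).ne'
  have hne : toLex (fun t => T (a + t)) ≠ toLex (fun t => T (b + t)) := by
    intro h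
    rcases lt_or_gt_of_ne hab with hlt | hlt
    · exact hsep hlt hb (congrFun h _)
    · exact hsep hlt ha (congrFun h _).symm
  exact lt_or_gt_of_ne hne

end Padded

section Pre3

variable {α : Type*} {T : ℕ → α}

theorem getElem?_pre3 (i : ℕ) {t : ℕ} (ht : t < 3) : (Pre3 T i)[t]? = some (T (i + t)) := by
  interval_cases t <;> rfl

theorem pre3_eq_pre3 {i j : ℕ} (h : ∀ t < 3, T (i + t) = T (j + t)) : Pre3 T i = Pre3 T j := by
  simp only [Pre3, List.cons.injEq, and_true]
  exact ⟨h 0 (by norm_num), h 1 (by norm_num), h 2 (by norm_num)⟩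

theorem pre3_lt_pre3 [LinearOrder α] {i j r : ℕ} (hr : r < 3)
    (heq : ∀ t < r, T (i + t) = T (j + t)) (hlt : T (i + r) < T (j + r)) :
    Pre3 T i < Pre3 T j :=
  List.lex_of_getElem? (i := r)
    (fun t ht => by rw [getElem?_pre3 i (by omega), getElem?_pre3 j (by omega), heq t ht])
    (getElem?_pre3 j hr) (fun x hx => by simp_all [getElem?_pre3 i hr])

end Pre3

section Rank

variable {α : Type*} [LinearOrder α] {n : ℕ} {T : ℕ → α}

theorem rank3_nonneg (j : ℕ) : 0 ≤ Rank3 n T j := Int.natCast_nonneg _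

theorem rank3_eq_of_pre3_eq {j k : ℕ} (h : Pre3 T j = Pre3 T k) : Rank3 n T j = Rank3 n T k := by
  simp only [Rank3, h]

theorem rank3_lt_rank3 {j k : ℕ} (hj : j < n) (hj3 : j % 3 ≠ 0) (h : Pre3 T j < Pre3 T k) :
    Rank3 n T j < Rank3 n T k := by
  unfold Rank3
  exact_mod_cast List.length_filter_lt_length_filter
    (fun j' hj' => by
      simp only [Bool.and_eq_true, decide_eq_true_eq] at hj' ⊢
      exact ⟨hj'.1, lt_trans hj'.2 h⟩)
    (List.mem_range.mpr hj) (by simpa [hj3] using h) (by simp)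

end Rank

theorem filter_range_mod_three {r : ℕ} (hr : r < 3) (n : ℕ) :
    (List.range n).filter (fun j => j % 3 = r) =
      (List.range ((n + 2 - r) / 3)).map (fun i => 3 * i + r) := by
  induction n with
  | zero => simp; omega
  | succ n ih =>
    rw [List.range_succ, List.filter_append, ih]
    by_cases h : n % 3 = r
    · rw [show (n + 1 + 2 - r) / 3 = (n + 2 - r) / 3 + 1 by omega, List.range_succ,
        List.map_append]
      simp [h, show 3 * ((n + 2 - r) / 3) + r = n by omega]
    · rw [show (n + 1 + 2 - r) / 3 = (n + 2 - r) / 3 by omega]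
      simp [h]

def DC3Suffix {α : Type*} [LinearOrder α] (n : ℕ) (T : ℕ → α) (a : ℕ) : List ℤ :=
  (DC3Text n T).drop (DC3Pos n a)

theorem getElem?_dc3Suffix {α : Type*} [LinearOrder α] {n : ℕ} {T : ℕ → α} {a s : ℕ}
    (ha3 : a % 3 ≠ 0) (hs : a + 3 * s < n + 3) :
    (DC3Suffix n T a)[s]? =
      if a + 3 * s < n then some (Rank3 n T (a + 3 * s))
      else if a % 3 = 1 then some (-1) else none := by
  unfold DC3Suffix DC3Text DC3Pos
  rw [List.getElem?_drop, filter_range_mod_three (by norm_num : 1 < 3),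
    filter_range_mod_three (by norm_num : 2 < 3)]
  by_cases h1 : a % 3 = 1
  · by_cases hin : a + 3 * s < n
    · simp [h1, hin, List.getElem?_append, show a / 3 + s < (n + 1) / 3 by omega,
        show 3 * (a / 3 + s) + 1 = a + 3 * s by omega]
    · simp [h1, hin, show a / 3 + s = (n + 1) / 3 by omega]
  · have hB : ¬ (n + 1) / 3 + 1 + a / 3 + s < (n + 1) / 3 := by omega
    have hi : (n + 1) / 3 + 1 + a / 3 + s - (n + 1) / 3 = (a / 3 + s) + 1 := by omega
    by_cases hin : a + 3 * s < n
    · simp [h1, hin, hB, hi, List.getElem?_append, show a / 3 + s < n / 3 by omega,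
        show 3 * (a / 3 + s) + 2 = a + 3 * s by omega]
    · simp [h1, hin, hB, hi, List.getElem?_append, show n / 3 ≤ a / 3 + s by omega]

theorem dc3Suffix_lt_of_suffLt {α : Type*} [LinearOrder α] {n : ℕ} {T : ℕ → α}
    (hpad : ∀ i j : ℕ, n ≤ i → j < n → T i < T j)
    (hpadEq : ∀ i j : ℕ, n ≤ i → n ≤ j → T i = T j) {a b : ℕ}
    (ha : a < n) (ha3 : a % 3 ≠ 0) (hb3 : b % 3 ≠ 0) (h : SuffLt T a b) :
    DC3Suffix n T a < DC3Suffix n T b := by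
  obtain ⟨m, heq, hlt⟩ := h
  set s := m / 3
  have hbs : b + 3 * s < n := by
    have := lt_of_apply_lt hpad hpadEq hlt
    omega
  have has : ∀ i < s, a + 3 * i < n := fun i hi =>
    lt_of_apply_eq hpad (heq (3 * i) (by omega)) (by omega)
  have has_s : a + 3 * s < n + 3 := by
    obtain hs | hs := Nat.eq_zero_or_pos s
    · omega
    · have := has (s - 1) (by omega)
      omega
  have hpre_eq : ∀ i < s, Pre3 T (a + 3 * i) = Pre3 T (b + 3 * i) := fun i hi =>
    pre3_eq_pre3 fun t ht => by simpa only [add_assoc] using heq (3 * i + t) (by omega)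
  have hpre_lt : Pre3 T (a + 3 * s) < Pre3 T (b + 3 * s) :=
    pre3_lt_pre3 (r := m % 3) (Nat.mod_lt m (by norm_num))
      (fun t ht => by simpa only [add_assoc] using heq (3 * s + t) (by omega))
      (by rwa [add_assoc, add_assoc, Nat.div_add_mod])
  refine List.lex_of_getElem? (i := s) (y := Rank3 n T (b + 3 * s)) (fun i hi => ?_)
    (by simp [getElem?_dc3Suffix hb3 (by omega : b + 3 * s < n + 3), hbs]) (fun x hx => ?_)
  · rw [getElem?_dc3Suffix ha3 (by linarith [has i hi]), getElem?_dc3Suffix hb3 (by omega),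
      if_pos (has i hi), if_pos (by omega), rank3_eq_of_pre3_eq (hpre_eq i hi)]
  · rw [getElem?_dc3Suffix ha3 has_s] at hx
    split_ifs at hx with hin
    · cases hx
      exact rank3_lt_rank3 hin (by omega) hpre_lt
    · cases hx
      linarith [rank3_nonneg (n := n) (T := T) (b + 3 * s)]
    · cases hx

/-- DC3 recursion correctness (rank transfer): for a text `T` of length `n` padded
with minimal sentinels, and sample positions `a, b` (residue mod 3 in `{1, 2}`),
suffix `a` of `T` is lexicographically smaller than suffix `b` of `T` iff the
suffix of `T'` corresponding to `a` is lexicographically smaller than the suffix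
of `T'` corresponding to `b`. -/
theorem dc3_rank_transfer {α : Type*} [LinearOrder α] (n : ℕ) (T : ℕ → α)
    (hpad : ∀ i j : ℕ, n ≤ i → j < n → T i < T j)
    (hpadEq : ∀ i j : ℕ, n ≤ i → n ≤ j → T i = T j) :
    ∀ a b : ℕ, a < n → b < n → a % 3 ≠ 0 → b % 3 ≠ 0 →
      (SuffLt T a b ↔
        List.Lex (· < ·) ((DC3Text n T).drop (DC3Pos n a))
          ((DC3Text n T).drop (DC3Pos n b))) := by
  intro a b ha hb ha3 hb3
  refine ⟨dc3Suffix_lt_of_suffLt hpad hpadEq ha ha3 hb3, fun h => ?_⟩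
  by_contra hab
  obtain rfl | hne := eq_or_ne a b
  · exact lt_irrefl (DC3Suffix n T a) h
  · have hba := (suffLt_or_suffLt_of_ne hpad ha hb hne).resolve_left hab
    exact lt_asymm h (dc3Suffix_lt_of_suffLt hpad hpadEq hb hb3 ha3 hba)
end
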